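/- arXiv:1012.5520 — 2 statements merged into one kernel-verified Lean document; each statement's English description precedes it below -/
import Mathlib

section
/- Let m ∈ ℕ, let M be a nonempty closed subset of ℝ^m and let p, q ∈ M. If there exists at least one admissible path from p to q in M, then the energy functional attains its minimum over the class of admissible paths: there is an admissible path (γ*, g*) such that E(γ*) ≤ E(γ) for every admissible path (γ, g) from p to q in M. -/
open MeasureTheory Set

/-- `(γ, g)` is an admissible path from `p` to `q` in `M ⊆ ℝ^m`:
`γ` is continuous on `[0,1]`, `g ∈ L²([0,1], ℝ^m)`,
`γ t = p + ∫₀ᵗ g` on `[0,1]`, `γ 1 = q` and `γ` stays in `M`. -/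
def IsAdmissiblePath {m : ℕ} (M : Set (EuclideanSpace ℝ (Fin m)))
    (p q : EuclideanSpace ℝ (Fin m))
    (γ g : ℝ → EuclideanSpace ℝ (Fin m)) : Prop :=
  ContinuousOn γ (Icc 0 1) ∧
  MemLp g 2 (volume.restrict (Icc (0:ℝ) 1)) ∧
  (∀ t ∈ Icc (0:ℝ) 1, γ t = p + ∫ s in (0:ℝ)..t, g s) ∧
  γ 1 = q ∧
  ∀ t ∈ Icc (0:ℝ) 1, γ t ∈ M

/-- The energy of an admissible path. -/
noncomputable def pathEnergy {m : ℕ} (g : ℝ → EuclideanSpace ℝ (Fin m)) : ℝ :=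
  ∫ s in Icc (0:ℝ) 1, ‖g s‖ ^ 2

/-! The energy is the squared `L²` norm of the velocity `g`, and every constraint on the path
`p + ∫₀ᵗ g` involves only the coordinates of `∫₀ᵗ g`, which are inner products of `g` with
indicator functions. Hence the admissible velocities form a weakly closed subset of `L²`. Through
the Riesz isomorphism the weak topology is the weak-* topology of the dual, in which closed balls
are compact (Banach–Alaoglu) and the norm is lower semicontinuous, so the norm attains its minimum
on any nonempty weakly closed set. -/

open InnerProductSpace

namespace WeakDual

theorem lowerSemicontinuous_norm_toStrongDual {𝕜 E : Type*} [NontriviallyNormedField 𝕜]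
    [SeminormedAddCommGroup E] [NormedSpace 𝕜 E] :
    LowerSemicontinuous fun φ : WeakDual 𝕜 E => ‖toStrongDual φ‖ := by
  refine lowerSemicontinuous_iff_isClosed_preimage.mpr fun r => ?_
  simpa [Set.preimage, Metric.closedBall] using isClosed_closedBall (0 : StrongDual 𝕜 E) r

theorem exists_isMinOn_norm_toStrongDual {𝕜 E : Type*} [NontriviallyNormedField 𝕜]
    [ProperSpace 𝕜] [SeminormedAddCommGroup E] [NormedSpace 𝕜 E] {S : Set (WeakDual 𝕜 E)}
    (hS : IsClosed S) (hne : S.Nonempty) :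
    ∃ φ ∈ S, IsMinOn (fun φ => ‖toStrongDual φ‖) S φ := by
  obtain ⟨φ₁, hφ₁⟩ := hne
  set K := S ∩ toStrongDual ⁻¹' Metric.closedBall 0 ‖toStrongDual φ₁‖
  have hφ₁K : φ₁ ∈ K := ⟨hφ₁, by simp⟩
  obtain ⟨φ, hφK, hmin⟩ := lowerSemicontinuous_norm_toStrongDual.lowerSemicontinuousOn K
    |>.exists_isMinOn ⟨φ₁, hφ₁K⟩ ((isCompact_closedBall _ _).inter_left hS)
  refine ⟨φ, hφK.1, fun ψ hψ => ?_⟩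
  by_cases hψK : ψ ∈ K
  · exact hmin hψK
  · have : ‖toStrongDual φ₁‖ < ‖toStrongDual ψ‖ := by simpa [K, hψ] using hψK
    exact (hmin hφ₁K).trans this.le

end WeakDual

theorem InnerProductSpace.exists_isMinOn_norm_of_isClosed_preimage_toDual_symm
    {𝕜 H : Type*} [RCLike 𝕜] [NormedAddCommGroup H] [InnerProductSpace 𝕜 H] [CompleteSpace H]
    {S : Set H}
    (hS : IsClosed ((fun φ : WeakDual 𝕜 H => (toDual 𝕜 H).symm φ.toStrongDual) ⁻¹' S))
    (hne : S.Nonempty) : ∃ x ∈ S, IsMinOn norm S x := by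
  obtain ⟨y, hy⟩ := hne
  obtain ⟨φ, hφ, hmin⟩ := WeakDual.exists_isMinOn_norm_toStrongDual hS
    ⟨StrongDual.toWeakDual (toDual 𝕜 H y), by simpa using hy⟩
  refine ⟨_, hφ, fun z hz => ?_⟩
  simpa using hmin (a := StrongDual.toWeakDual (toDual 𝕜 H z)) (by simpa using hz)

theorem MeasureTheory.continuous_setIntegral_toDual_symm {α ι : Type*} [MeasurableSpace α]
    {μ : Measure α} [Fintype ι] {s : Set α} (hs : MeasurableSet s) (hμs : μ s ≠ ⊤) :
    Continuous fun φ : WeakDual ℝ (Lp (EuclideanSpace ℝ ι) 2 μ) =>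
      ∫ a in s, ((toDual ℝ (Lp (EuclideanSpace ℝ ι) 2 μ)).symm φ.toStrongDual :
        α → EuclideanSpace ℝ ι) a ∂μ := by
  classical
  have key (φ : WeakDual ℝ (Lp (EuclideanSpace ℝ ι) 2 μ)) :
      ∫ a in s, ((toDual ℝ (Lp (EuclideanSpace ℝ ι) 2 μ)).symm φ.toStrongDual :
        α → EuclideanSpace ℝ ι) a ∂μ =
        WithLp.toLp 2 fun i => φ (indicatorConstLp 2 hs hμs (EuclideanSpace.single i 1)) := by
    obtain ⟨x, rfl⟩ : ∃ x, φ = StrongDual.toWeakDual (toDual ℝ _ x) :=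
      ⟨(toDual ℝ _).symm (WeakDual.toStrongDual φ), by simp⟩
    ext i
    simp only [StrongDual.toWeakDual_apply]
    rw [toDual_apply_apply, real_inner_comm,
      L2.inner_indicatorConstLp_eq_inner_setIntegral ℝ hs hμs, EuclideanSpace.inner_single_left]
    simp
  simp only [key]
  exact (PiLp.continuous_toLp 2 _).comp (continuous_pi fun i => WeakDual.eval_continuous _)

theorem intervalIntegral_eq_setIntegral_restrict_Icc {E : Type*} [NormedAddCommGroup E]
    [NormedSpace ℝ E] (f : ℝ → E) {a b t : ℝ} (ht : t ∈ Icc a b) :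
    ∫ s in a..t, f s = ∫ s in Ioc a t, f s ∂(volume.restrict (Icc a b)) := by
  rw [intervalIntegral.integral_of_le ht.1, Measure.restrict_restrict measurableSet_Ioc,
    inter_eq_left.mpr (Ioc_subset_Icc_self.trans (Icc_subset_Icc_right ht.2))]

section AdmissiblePath

variable {m : ℕ}

local notation "L²[0,1]" => Lp (EuclideanSpace ℝ (Fin m)) 2 (volume.restrict (Icc (0:ℝ) 1))

def admissibleVelocities (M : Set (EuclideanSpace ℝ (Fin m))) (p q : EuclideanSpace ℝ (Fin m)) :
    Set L²[0,1] :=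
  {x | (∀ t ∈ Icc (0:ℝ) 1, p + ∫ s in Ioc 0 t, x s ∂(volume.restrict (Icc 0 1)) ∈ M) ∧
    p + ∫ s in Ioc 0 1, x s ∂(volume.restrict (Icc 0 1)) = q}

theorem isClosed_preimage_admissibleVelocities {M : Set (EuclideanSpace ℝ (Fin m))}
    (hM : IsClosed M) (p q : EuclideanSpace ℝ (Fin m)) :
    IsClosed ((fun φ : WeakDual ℝ L²[0,1] => (toDual ℝ L²[0,1]).symm φ.toStrongDual) ⁻¹'
      admissibleVelocities M p q) := by
  have hcont (t : ℝ) := continuous_const (y := p).add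
    (continuous_setIntegral_toDual_symm (μ := volume.restrict (Icc (0:ℝ) 1)) (ι := Fin m)
      measurableSet_Ioc (measure_ne_top _ (Ioc 0 t)))
  convert (isClosed_biInter fun t (_ : t ∈ Icc (0:ℝ) 1) => hM.preimage (hcont t)).inter
    ((isClosed_singleton (x := q)).preimage (hcont 1)) using 1
  ext φ
  simp [admissibleVelocities]

theorem pathEnergy_eq_norm_sq (x : L²[0,1]) {g : ℝ → EuclideanSpace ℝ (Fin m)}
    (hg : g =ᵐ[volume.restrict (Icc 0 1)] x) : pathEnergy g = ‖x‖ ^ 2 := by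
  rw [← real_inner_self_eq_norm_sq, L2.inner_def, pathEnergy]
  exact integral_congr_ae (hg.mono fun s hs => by simp [hs])

theorem IsAdmissiblePath.toLp_mem_admissibleVelocities {M : Set (EuclideanSpace ℝ (Fin m))}
    {p q : EuclideanSpace ℝ (Fin m)} {γ g : ℝ → EuclideanSpace ℝ (Fin m)}
    (h : IsAdmissiblePath M p q γ g) : h.2.1.toLp g ∈ admissibleVelocities M p q := by
  obtain ⟨-, hg, hγ, hγ1, hγM⟩ := h
  have hprim (t : ℝ) (ht : t ∈ Icc (0:ℝ) 1) :
      γ t = p + ∫ s in Ioc 0 t, hg.toLp g s ∂(volume.restrict (Icc 0 1)) := by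
    rw [hγ t ht, intervalIntegral_eq_setIntegral_restrict_Icc g ht]
    exact congrArg _ (integral_congr_ae (ae_restrict_of_ae hg.coeFn_toLp.symm))
  exact ⟨fun t ht => hprim t ht ▸ hγM t ht, hprim 1 (right_mem_Icc.mpr zero_le_one) ▸ hγ1⟩

theorem isAdmissiblePath_primitive {M : Set (EuclideanSpace ℝ (Fin m))}
    {p q : EuclideanSpace ℝ (Fin m)} {x : L²[0,1]} (hx : x ∈ admissibleVelocities M p q) :
    IsAdmissiblePath M p q (fun t => p + ∫ s in (0:ℝ)..t, x s) x := by
  have hprim (t : ℝ) (ht : t ∈ Icc (0:ℝ) 1) :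
      p + ∫ s in (0:ℝ)..t, x s = p + ∫ s in Ioc 0 t, x s ∂(volume.restrict (Icc 0 1)) := by
    rw [intervalIntegral_eq_setIntegral_restrict_Icc _ ht]
  refine ⟨?_, Lp.memLp x, fun t _ => rfl, ?_,
    fun t ht => by simpa only [hprim t ht] using hx.1 t ht⟩
  · have hint : IntegrableOn x (uIcc 0 1) := by
      rw [uIcc_of_le zero_le_one]
      exact (Lp.memLp x).integrable one_le_two
    have hcont := intervalIntegral.continuousOn_primitive_interval hint
    rw [uIcc_of_le zero_le_one] at hcont
    exact continuousOn_const.add hcont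
  · exact (hprim 1 (right_mem_Icc.mpr zero_le_one)).trans hx.2

end AdmissiblePath

theorem energy_attains_min_general {m : ℕ} (M : Set (EuclideanSpace ℝ (Fin m)))
    (hMclosed : IsClosed M)
    (p q : EuclideanSpace ℝ (Fin m))
    (hex : ∃ γ g, IsAdmissiblePath M p q γ g) :
    ∃ γ₀ g₀, IsAdmissiblePath M p q γ₀ g₀ ∧
      ∀ γ g, IsAdmissiblePath M p q γ g → pathEnergy g₀ ≤ pathEnergy g := by
  obtain ⟨_, _, hadm⟩ := hex
  obtain ⟨x₀, hx₀, hmin⟩ := exists_isMinOn_norm_of_isClosed_preimage_toDual_symm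
    (isClosed_preimage_admissibleVelocities hMclosed p q) ⟨_, hadm.toLp_mem_admissibleVelocities⟩
  refine ⟨_, _, isAdmissiblePath_primitive hx₀, fun γ g h => ?_⟩
  rw [pathEnergy_eq_norm_sq x₀ Filter.EventuallyEq.rfl,
    pathEnergy_eq_norm_sq _ h.2.1.coeFn_toLp.symm]
  gcongr
  exact hmin h.toLp_mem_admissibleVelocities

/-- The energy functional attains its minimum over admissible paths from `p` to `q` in a
nonempty closed set `M ⊆ ℝ^m`, as soon as one admissible path exists. -/
theorem energy_attains_min {m : ℕ} (M : Set (EuclideanSpace ℝ (Fin m)))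
    (hM : M.Nonempty) (hMclosed : IsClosed M)
    (p q : EuclideanSpace ℝ (Fin m)) (hp : p ∈ M) (hq : q ∈ M)
    (hex : ∃ γ g, IsAdmissiblePath M p q γ g) :
    ∃ γ₀ g₀, IsAdmissiblePath M p q γ₀ g₀ ∧
      ∀ γ g, IsAdmissiblePath M p q γ g → pathEnergy g₀ ≤ pathEnergy g :=
  energy_attains_min_general M hMclosed p q hex
end

section
/- Let X be a metric space, f : X → ℝ a continuous function, ν > 0, and let A ⊆ B ⊆ X with A closed and B open. Suppose there is a continuous map η : (X ∖ A) × [0,1] → X such that η(x,0) = x and f(η(x,t)) ≤ f(x) − ν t for all x ∈ X ∖ A and t ∈ [0,1]. Then there exists a continuous map μ : X × [0,1] → X such that: μ(x,0) = x for all x; μ(x,t) = x for all x ∈ A and all t; f(μ(x,t)) ≤ f(x) for all x and t; and for every x ∉ B, f(μ(x,1)) ≤ f(x) − ν. -/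
open Set

/-- Cutoff-deformation construction: given a continuous deformation `η` defined off a closed
set `A`, decreasing `f` at rate `ν`, and an open set `B ⊇ A`, one obtains a globally defined
continuous deformation `μ` fixing `A`, never increasing `f`, and decreasing `f` by `ν` at
time `1` outside `B`. -/
theorem cutoff_deformation
    {X : Type*} [MetricSpace X]
    (f : X → ℝ) (hf : Continuous f) (ν : ℝ) (hν : 0 < ν)
    (A B : Set X) (hAB : A ⊆ B) (hA : IsClosed A) (hB : IsOpen B)
    (η : X → ℝ → X)
    (hηcont : ContinuousOn (fun z : X × ℝ => η z.1 z.2) (Aᶜ ×ˢ Icc (0:ℝ) 1))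
    (hη0 : ∀ x ∉ A, η x 0 = x)
    (hηdec : ∀ x ∉ A, ∀ t ∈ Icc (0:ℝ) 1, f (η x t) ≤ f x - ν * t) :
    ∃ μ : X → ℝ → X,
      ContinuousOn (fun z : X × ℝ => μ z.1 z.2) (univ ×ˢ Icc (0:ℝ) 1) ∧
      (∀ x, μ x 0 = x) ∧
      (∀ x ∈ A, ∀ t ∈ Icc (0:ℝ) 1, μ x t = x) ∧
      (∀ x, ∀ t ∈ Icc (0:ℝ) 1, f (μ x t) ≤ f x) ∧
      (∀ x ∉ B, f (μ x 1) ≤ f x - ν) := by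
  -- Choose an open set `U` with `A ⊆ U ⊆ closure U ⊆ B`.
  obtain ⟨U, hUopen, hAU, hUB⟩ := normal_exists_closure_subset hA hB hAB
  -- Urysohn cutoff: `θ = 0` on `closure U`, `θ = 1` on `Bᶜ`, `θ ∈ [0,1]`.
  obtain ⟨θ, hθ0, hθ1, hθmem⟩ :=
    exists_continuous_zero_one_of_isClosed isClosed_closure hB.isClosed_compl
      (disjoint_compl_right.mono hUB (le_refl _))
  classical
  refine ⟨fun x t => if x ∈ A then x else η x (θ x * t), ?_, ?_, ?_, ?_, ?_⟩
  · -- continuity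
    intro z hz
    by_cases hzU : z.1 ∈ U
    · -- near `A`, the map is locally the identity in `x`
      have : ContinuousWithinAt (fun z : X × ℝ => z.1) (univ ×ˢ Icc (0:ℝ) 1) z :=
        continuous_fst.continuousWithinAt
      refine this.congr_of_eventuallyEq ?_ ?_
      · filter_upwards [mem_nhdsWithin_of_mem_nhds
          ((hUopen.prod isOpen_univ).mem_nhds (by exact ⟨hzU, trivial⟩))] with w hw
        by_cases hwA : w.1 ∈ A
        · simp [hwA]
        · have : θ w.1 = 0 := hθ0 (subset_closure hw.1)
          simp [hwA, this, hη0 w.1 hwA]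
      · by_cases hzA : z.1 ∈ A
        · simp [hzA]
        · have : θ z.1 = 0 := hθ0 (subset_closure hzU)
          simp [hzA, this, hη0 z.1 hzA]
    · -- away from `A`, the map is `η` composed with a continuous reparametrization
      have hzA : z.1 ∉ A := fun h => hzU (hAU h)
      have hcomp : ContinuousWithinAt
          (fun z : X × ℝ => η z.1 (θ z.1 * z.2)) (univ ×ˢ Icc (0:ℝ) 1) z := by
        have hφ : Continuous (fun z : X × ℝ => (z.1, θ z.1 * z.2)) :=
          continuous_fst.prodMk ((θ.continuous.comp continuous_fst).mul continuous_snd)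
        have hmaps : MapsTo (fun z : X × ℝ => (z.1, θ z.1 * z.2))
            ((Aᶜ ×ˢ univ) ∩ (univ ×ˢ Icc (0:ℝ) 1)) (Aᶜ ×ˢ Icc (0:ℝ) 1) := by
          rintro ⟨x, t⟩ ⟨⟨hx, -⟩, ⟨-, ht⟩⟩
          refine ⟨hx, mul_nonneg (hθmem x).1 ht.1, ?_⟩
          exact mul_le_one₀ (hθmem x).2 ht.1 ht.2
        have := (hηcont.comp hφ.continuousOn hmaps).continuousWithinAt
          (x := z) ⟨⟨hzA, trivial⟩, hz⟩
        refine this.mono_of_mem_nhdsWithin (Filter.inter_mem (mem_nhdsWithin_of_mem_nhds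
          ((hA.isOpen_compl.prod isOpen_univ).mem_nhds ⟨hzA, trivial⟩)) self_mem_nhdsWithin)
      refine hcomp.congr_of_eventuallyEq ?_ (by simp [hzA])
      filter_upwards [mem_nhdsWithin_of_mem_nhds
        ((hA.isOpen_compl.prod isOpen_univ).mem_nhds ⟨hzA, trivial⟩)] with w hw
      simp [show w.1 ∉ A from hw.1]
  · intro x
    by_cases hx : x ∈ A
    · simp [hx]
    · simp [hx, hη0 x hx]
  · intro x hx t ht; simp [hx]
  · intro x t ht
    by_cases hx : x ∈ A
    · simp [hx]
    · simp only [hx, if_false]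
      have hmem : θ x * t ∈ Icc (0:ℝ) 1 :=
        ⟨mul_nonneg (hθmem x).1 ht.1, mul_le_one₀ (hθmem x).2 ht.1 ht.2⟩
      have := hηdec x hx _ hmem
      nlinarith [mul_nonneg (mul_nonneg hν.le (hθmem x).1) ht.1]
  · intro x hx
    have hxA : x ∉ A := fun h => hx (hAB h)
    have hθx : θ x = 1 := hθ1 hx
    have := hηdec x hxA 1 ⟨zero_le_one, le_refl 1⟩
    simp [hxA, hθx]
    linarith
end
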